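/- Let a, b be real numbers with 0 < a < 1 and 0 < b < 1. Then for all real w with 0 < w < 1, d/dw [ −log w − ab·w·₄F₃(a+1, b+1, 1, 1; 2, 2, 2; w) ] = −₂F₁(a, b; 1; w)/w. Equivalently, the function G(t) := −log(1−t) − ab(1−t)·₄F₃(a+1, b+1, 1, 1; 2, 2, 2; 1−t) satisfies (t−1)·G′(t) = −₂F₁(a, b; 1; 1−t) for 0 < t < 1. -/

import Mathlib

set_option autoImplicit false

/-- Pochhammer symbol `(a)_n = a(a+1)⋯(a+n−1)` for a real number. -/
noncomputable def pochR (a : ℝ) (n : ℕ) : ℝ := ∏ k ∈ Finset.range n, (a + k)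

/-- Gauss hypergeometric series `₂F₁(a,b;c;x)` (real). -/
noncomputable def hyp2F1 (a b c x : ℝ) : ℝ :=
  ∑' n : ℕ, (pochR a n * pochR b n) / (pochR c n * (n.factorial : ℝ)) * x ^ n

/-- Generalized hypergeometric series `₄F₃(a₁,a₂,a₃,a₄;b₁,b₂,b₃;x)` (real). -/
noncomputable def hyp4F3 (a₁ a₂ a₃ a₄ b₁ b₂ b₃ x : ℝ) : ℝ :=
  ∑' n : ℕ, (pochR a₁ n * pochR a₂ n * pochR a₃ n * pochR a₄ n) /
    (pochR b₁ n * pochR b₂ n * pochR b₃ n * (n.factorial : ℝ)) * x ^ n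

/-!
With `c n = (a)ₙ (b)ₙ / (n!)²` the coefficients of `₂F₁(a, b; 1; w)`, the Pochhammer identities
`(a)ₙ₊₁ = a (a+1)ₙ`, `(1)ₙ = n!` and `(2)ₙ = (n+1)!` turn `a b w ₄F₃(a+1, b+1, 1, 1; 2, 2, 2; w)`
into `∑ c (n+1) wⁿ⁺¹ / (n+1)`, a termwise antiderivative of `(₂F₁(a, b; 1; w) - 1) / w`.
For `|a|, |b| ≤ 1` the coefficients are bounded by `1`, so termwise differentiation is justified
on `|w| < 1`, and the `-log w` term supplies the missing `-1 / w`.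
-/

open Finset

lemma pochR_succ (a : ℝ) (n : ℕ) : pochR a (n + 1) = a * pochR (a + 1) n := by
  rw [pochR, prod_range_succ', pochR, mul_comm]
  push_cast
  simp only [add_zero, add_assoc, add_comm (1 : ℝ)]

lemma pochR_add_one (a : ℝ) (n : ℕ) : pochR a (n + 1) = pochR a n * (a + n) :=
  prod_range_succ _ _

lemma pochR_one (n : ℕ) : pochR 1 n = n.factorial := by
  induction n with
  | zero => simp [pochR]
  | succ n ih => rw [pochR_add_one, ih, Nat.factorial_succ]; push_cast; ring

lemma pochR_two (n : ℕ) : pochR 2 n = (n + 1).factorial := by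
  rw [← pochR_one, pochR_succ, one_add_one_eq_two, one_mul]

lemma abs_pochR_le_factorial {a : ℝ} (ha : |a| ≤ 1) (n : ℕ) : |pochR a n| ≤ n.factorial := by
  rw [← pochR_one, pochR, pochR, abs_prod]
  gcongr with k
  exact (abs_add_le a k).trans (by rw [Nat.abs_cast]; linarith)

noncomputable def gaussCoeff (a b : ℝ) (n : ℕ) : ℝ :=
  pochR a n * pochR b n / ((n.factorial : ℝ) * n.factorial)

lemma gaussCoeff_zero (a b : ℝ) : gaussCoeff a b 0 = 1 := by simp [gaussCoeff, pochR]

lemma abs_gaussCoeff_le_one {a b : ℝ} (ha : |a| ≤ 1) (hb : |b| ≤ 1) (n : ℕ) :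
    |gaussCoeff a b n| ≤ 1 := by
  have hfac : (0 : ℝ) < n.factorial := by exact_mod_cast n.factorial_pos
  rw [gaussCoeff, abs_div, abs_mul, abs_mul, Nat.abs_cast, div_le_one (by positivity)]
  exact mul_le_mul (abs_pochR_le_factorial ha n) (abs_pochR_le_factorial hb n)
    (abs_nonneg _) hfac.le

lemma hyp2F1_one_eq_tsum (a b x : ℝ) :
    hyp2F1 a b 1 x = ∑' n : ℕ, gaussCoeff a b n * x ^ n := by
  simp only [hyp2F1, gaussCoeff, pochR_one]

lemma mul_hyp4F3_coeff (a b : ℝ) (n : ℕ) :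
    a * b * ((pochR (a + 1) n * pochR (b + 1) n * pochR 1 n * pochR 1 n) /
      (pochR 2 n * pochR 2 n * pochR 2 n * (n.factorial : ℝ)))
    = gaussCoeff a b (n + 1) / (n + 1) := by
  have hfac : (n.factorial : ℝ) ≠ 0 := Nat.cast_ne_zero.2 n.factorial_ne_zero
  rw [gaussCoeff, pochR_succ a, pochR_succ b, pochR_one, pochR_two, Nat.factorial_succ]
  push_cast
  field_simp

lemma mul_hyp4F3_eq_tsum (a b z : ℝ) :
    a * b * z * hyp4F3 (a + 1) (b + 1) 1 1 2 2 2 z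
      = ∑' n : ℕ, gaussCoeff a b (n + 1) / (n + 1) * z ^ (n + 1) := by
  rw [hyp4F3, ← tsum_mul_left]
  refine tsum_congr fun n => ?_
  rw [← mul_hyp4F3_coeff, pow_succ']
  ring

section BoundedPowerSeries

variable {c : ℕ → ℝ} {C : ℝ}

lemma summable_mul_pow_of_abs_le (hc : ∀ n, |c n| ≤ C) {x : ℝ} (hx : |x| < 1) :
    Summable fun n => c n * x ^ n :=
  .of_norm_bounded ((summable_geometric_of_lt_one (abs_nonneg x) hx).mul_left C) fun n => by
    rw [Real.norm_eq_abs, abs_mul, abs_pow]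
    exact mul_le_mul_of_nonneg_right (hc n) (by positivity)

lemma hasDerivAt_tsum_div_succ_mul_pow_succ (hc : ∀ n, |c n| ≤ C) {w : ℝ} (hw : |w| < 1) :
    HasDerivAt (fun z => ∑' n : ℕ, c n / (n + 1) * z ^ (n + 1)) (∑' n : ℕ, c n * w ^ n) w := by
  obtain ⟨r, hwr', hr1⟩ := exists_between hw
  have hr0 : 0 < r := (abs_nonneg w).trans_lt hwr'
  have hwr : w ∈ Set.Ioo (-r) r := abs_lt.mp hwr'
  refine hasDerivAt_tsum_of_isPreconnected (u := fun n => C * r ^ n)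
    (g' := fun n y => c n * y ^ n) ((summable_geometric_of_lt_one hr0.le hr1).mul_left C)
    isOpen_Ioo (convex_Ioo _ _).isPreconnected (fun n y _ => ?_) (fun n y hy => ?_)
    (y₀ := 0) (abs_lt.mp (by rwa [abs_zero])) (by simp) hwr
  · refine ((hasDerivAt_pow (n + 1) y).const_mul (c n / (n + 1))).congr_deriv ?_
    push_cast
    field_simp
  · rw [Real.norm_eq_abs, abs_mul, abs_pow]
    exact mul_le_mul (hc n) (pow_le_pow_left₀ (abs_nonneg y) (abs_lt.mpr hy).le n)
      (by positivity) ((abs_nonneg _).trans (hc n))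

end BoundedPowerSeries

lemma hasDerivAt_neg_log_sub_mul_hyp4F3 {a b : ℝ} (ha : |a| ≤ 1) (hb : |b| ≤ 1) {w : ℝ}
    (hw0 : 0 < w) (hw1 : w < 1) :
    HasDerivAt (fun w : ℝ => -Real.log w - a * b * w * hyp4F3 (a + 1) (b + 1) 1 1 2 2 2 w)
      (-hyp2F1 a b 1 w / w) w := by
  have hc (n : ℕ) : |gaussCoeff a b (n + 1)| ≤ 1 := abs_gaussCoeff_le_one ha hb _
  have hw : |w| < 1 := abs_lt.mpr ⟨by linarith, hw1⟩
  have hseries := hasDerivAt_tsum_div_succ_mul_pow_succ hc hw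
  simp only [mul_hyp4F3_eq_tsum]
  refine ((Real.hasDerivAt_log hw0.ne').neg.sub hseries).congr_deriv ?_
  have hsplit : hyp2F1 a b 1 w = 1 + w * ∑' n : ℕ, gaussCoeff a b (n + 1) * w ^ n := by
    rw [hyp2F1_one_eq_tsum, (summable_mul_pow_of_abs_le (abs_gaussCoeff_le_one ha hb) hw)
      |>.tsum_eq_zero_add, gaussCoeff_zero, ← tsum_mul_left]
    simp only [pow_zero, mul_one, pow_succ]
    congr 1
    exact tsum_congr fun n => by ring
  rw [hsplit]
  field_simp
  ring

theorem stmt9 (a b : ℝ) (ha0 : 0 < a) (ha1 : a < 1) (hb0 : 0 < b) (hb1 : b < 1) :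
    (∀ w : ℝ, 0 < w → w < 1 →
      HasDerivAt
        (fun w : ℝ => -Real.log w - a * b * w * hyp4F3 (a + 1) (b + 1) 1 1 2 2 2 w)
        (-hyp2F1 a b 1 w / w) w) ∧
    (∀ t : ℝ, 0 < t → t < 1 →
      (t - 1) * deriv
          (fun t : ℝ =>
            -Real.log (1 - t) - a * b * (1 - t) * hyp4F3 (a + 1) (b + 1) 1 1 2 2 2 (1 - t)) t
        = -hyp2F1 a b 1 (1 - t)) := by
  have ha : |a| ≤ 1 := abs_le.mpr ⟨by linarith, ha1.le⟩
  have hb : |b| ≤ 1 := abs_le.mpr ⟨by linarith, hb1.le⟩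
  refine ⟨fun w hw0 hw1 => hasDerivAt_neg_log_sub_mul_hyp4F3 ha hb hw0 hw1, fun t ht0 ht1 => ?_⟩
  have hG := (hasDerivAt_neg_log_sub_mul_hyp4F3 ha hb (w := 1 - t) (by linarith)
    (by linarith)).comp t ((hasDerivAt_id t).const_sub 1)
  rw [Function.comp_def] at hG
  rw [hG.deriv]
  field_simp [(by linarith : (1 : ℝ) - t ≠ 0)]
  ring
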